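/- arXiv:1201.5161 — 3 statements merged into one kernel-verified Lean document; each statement's English description precedes it below -/
import Mathlib

section
/- Let R = ℤ⟨A,D⟩ be the free noncommutative polynomial ring on two variables A, D, graded with deg A = deg D = 1, and set c = A + D and d = AD + DA. Then the family of all cd-monomials (noncommutative words in c and d, where d contributes degree 2) is linearly independent in R; i.e., the subring generated by c and d is free on c and d. -/
/-!
Order words in `A < D` lexicographically. Expanding a cd-monomial, its largest word arises by
choosing `D` from every `c` and `DA` from every `d`, and it occurs with coefficient `1`. This
leading word determines the monomial (a `D` followed by `A` comes from a `d`, any other `D` from a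
`c`), so in a nontrivial relation among cd-monomials the largest leading word cannot cancel.
-/

noncomputable section

/-- The free associative `ℤ`-algebra `ℤ⟨A,D⟩` on two noncommuting variables,
modeled as the monoid algebra of the free monoid on `Bool`
(`false` ↦ `A`, `true` ↦ `D`). -/
abbrev R : Type := MonoidAlgebra ℤ (FreeMonoid Bool)

def A : R := MonoidAlgebra.single (FreeMonoid.of false) 1
def D : R := MonoidAlgebra.single (FreeMonoid.of true) 1
def c : R := A + D
def d : R := A * D + D * A

/-- The cd-monomial corresponding to a word in `{c, d}` (`false` ↦ `c`, `true` ↦ `d`). -/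
def cdMon (l : List Bool) : R := (l.map (fun b => if b then d else c)).prod

open FreeMonoid

theorem linearIndependent_of_injective_leading {ι α R M : Type*} [LinearOrder α] [Ring R]
    [NoZeroDivisors R] [AddCommGroup M] [Module R M] (coord : α → M →ₗ[R] R) (f : ι → M)
    (lead : ι → α) (hlead : Function.Injective lead) (hne : ∀ i, coord (lead i) (f i) ≠ 0)
    (hle : ∀ i a, coord a (f i) ≠ 0 → a ≤ lead i) : LinearIndependent R f := by
  classical
  rw [linearIndependent_iff']
  intro s
  induction s using Finset.induction_on_max_value lead with
  | empty => simp
  | insert a s has hmax ih =>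
    intro g hsum i hi
    have hbelow : ∀ j ∈ s, coord (lead a) (f j) = 0 := fun j hj => by
      by_contra h
      exact has (hlead (le_antisymm (hmax j hj) (hle j _ h)) ▸ hj)
    have hga : g a = 0 := by
      have := congrArg (coord (lead a)) hsum
      rw [Finset.sum_insert has, map_add, map_sum, Finset.sum_eq_zero fun j hj => by
        rw [map_smul, hbelow j hj, smul_zero]] at this
      simpa [hne a] using this
    rw [Finset.sum_insert has, hga, zero_smul, zero_add] at hsum
    rcases Finset.mem_insert.1 hi with rfl | hi
    exacts [hga, ih g hsum i hi]

theorem MonoidAlgebra.exists_of_coeff_single_mul_ne_zero {k G : Type*} [Semiring k] [Mul G]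
    {x : MonoidAlgebra k G} {r : k} {a w : G} (h : (single a r * x).coeff w ≠ 0) :
    ∃ v, w = a * v ∧ x.coeff v ≠ 0 := by
  classical
  obtain ⟨v, hv, rfl⟩ := Finset.mem_image.1
    (support_coeff_single_mul_subset x r a (Finsupp.mem_support_iff.2 h))
  exact ⟨v, rfl, Finsupp.mem_support_iff.1 hv⟩

theorem List.append_le_append_left' {α : Type*} [LinearOrder α] (u : List α) {v v' : List α}
    (h : v ≤ v') : u ++ v ≤ u ++ v' := by
  rcases h.lt_or_eq with h | rfl
  exacts [le_of_lt (List.Lex.append_left _ h u), le_rfl]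

-- The lexicographically largest word of `c = A + D`, resp. `d = AD + DA`, for `A < D`.
def leadBlock (b : Bool) : List Bool := true :: if b then [false] else []

def leadWord (l : List Bool) : List Bool := l.flatMap leadBlock

def decodeLeadWord : List Bool → List Bool
  | true :: false :: w => true :: decodeLeadWord w
  | true :: w => false :: decodeLeadWord w
  | _ => []

theorem decodeLeadWord_leadWord (l : List Bool) : decodeLeadWord (leadWord l) = l := by
  induction l with
  | nil => rfl
  | cons b t ih =>
    cases b
    · cases t with
      | nil => rfl
      | cons b' t' => cases b' <;> simpa [leadWord, leadBlock, decodeLeadWord] using ih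
    · simpa [leadWord, leadBlock, decodeLeadWord] using ih

theorem leadWord_injective : Function.Injective leadWord :=
  Function.LeftInverse.injective decodeLeadWord_leadWord

theorem cdMon_cons (b : Bool) (t : List Bool) :
    cdMon (b :: t) = (if b then d else c) * cdMon t := by
  simp [cdMon]

theorem ite_d_c_eq_single_add_single (b : Bool) :
    ∃ u : List Bool, (if b then d else c) =
      MonoidAlgebra.single (ofList (leadBlock b)) 1 + MonoidAlgebra.single (ofList (false :: u)) 1 := by
  cases b
  · exact ⟨[], by rw [if_neg Bool.false_ne_true, c, A, D, add_comm]; rfl⟩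
  · refine ⟨[true], ?_⟩
    rw [if_pos rfl, d, A, D, MonoidAlgebra.single_mul_single, MonoidAlgebra.single_mul_single,
      add_comm, one_mul]
    rfl

theorem coeff_cdMon_leadWord (l : List Bool) : (cdMon l).coeff (ofList (leadWord l)) = 1 := by
  induction l with
  | nil => simp [cdMon, leadWord, MonoidAlgebra.one_def]
  | cons b t ih =>
    obtain ⟨u, hu⟩ := ite_d_c_eq_single_add_single b
    have hword : ofList (leadWord (b :: t)) = ofList (leadBlock b) * ofList (leadWord t) := by
      simp [leadWord]
    have hother : ∀ v, ofList (false :: u) * v ≠ ofList (leadWord (b :: t)) := fun v h => by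
      simpa [leadWord, leadBlock] using congrArg toList h
    rw [cdMon_cons, hu, add_mul, MonoidAlgebra.coeff_add, Finsupp.add_apply,
      MonoidAlgebra.coeff_single_mul_of_forall_mul_ne _ _ hother, hword,
      MonoidAlgebra.coeff_single_mul_mul, ih, one_mul, add_zero]

theorem le_leadWord_of_coeff_cdMon_ne_zero (l : List Bool) {w : FreeMonoid Bool}
    (h : (cdMon l).coeff w ≠ 0) : toList w ≤ leadWord l := by
  induction l generalizing w with
  | nil =>
    rw [cdMon, List.map_nil, List.prod_nil, MonoidAlgebra.one_def,
      MonoidAlgebra.coeff_single] at h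
    obtain ⟨rfl, -⟩ := Finsupp.single_apply_ne_zero.1 h
    exact le_rfl
  | cons b t ih =>
    obtain ⟨u, hu⟩ := ite_d_c_eq_single_add_single b
    rw [cdMon_cons, hu, add_mul, MonoidAlgebra.coeff_add, Finsupp.add_apply] at h
    by_cases hlead : (MonoidAlgebra.single (ofList (leadBlock b)) 1 * cdMon t).coeff w = 0
    · rw [hlead, zero_add] at h
      obtain ⟨v, rfl, -⟩ := MonoidAlgebra.exists_of_coeff_single_mul_ne_zero h
      rw [toList_mul, toList_ofList, leadWord, List.flatMap_cons, leadBlock]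
      exact le_of_lt (List.Lex.rel (by decide))
    · obtain ⟨v, rfl, hv⟩ := MonoidAlgebra.exists_of_coeff_single_mul_ne_zero hlead
      simpa [leadWord] using List.append_le_append_left' (leadBlock b) (ih hv)

/-- The family of all cd-monomials is linearly independent over `ℤ`;
i.e. the subring generated by `c` and `d` is free on `c` and `d`. -/
theorem cdMonomials_linearIndependent : LinearIndependent ℤ cdMon :=
  linearIndependent_of_injective_leading
    (fun w => (MonoidAlgebra.basis (FreeMonoid Bool) ℤ).coord (ofList w)) cdMon leadWord
    leadWord_injective (fun l => (coeff_cdMon_leadWord l).trans_ne one_ne_zero)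
    (fun l _ h => le_leadWord_of_coeff_cdMon_ne_zero l h)
end
end

section
/- Let p be a homogeneous element of ℤ⟨A,D⟩ of degree n. If p = f(c,d) + g(c,d)·D = f'(c,d) + g'(c,d)·D, where f, f' are homogeneous cd-polynomials of degree n and g, g' are homogeneous cd-polynomials of degree n−1, then f = f' and g = g'. -/
noncomputable section

/-- `p` is homogeneous of degree `n`: every word in its support has length `n`. -/
def Homog (n : ℕ) (p : R) : Prop := ∀ w ∈ p.coeff.support, FreeMonoid.length w = n

/-!
The automorphism of `ℤ⟨A,D⟩` swapping `A` and `D` fixes `c` and `d`, hence every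
cd-polynomial. Applying it to `h·D = f - f'` with `h = g' - g` gives `h·A = f - f'` as well,
so `h·(D - A) = 0`, and `h = 0` because the free algebra has no zero divisors.
-/

open MonoidAlgebra

def swapAD : R →+* R := mapDomainRingHom ℤ (FreeMonoid.map not)

lemma swapAD_single (w : FreeMonoid Bool) (a : ℤ) :
    swapAD (single w a) = single (FreeMonoid.map not w) a := by
  simp [swapAD, mapDomainRingHom]

lemma swapAD_A : swapAD A = D := by
  simp [A, D, swapAD_single]

lemma swapAD_D : swapAD D = A := by
  simp [A, D, swapAD_single]

lemma swapAD_c : swapAD c = c := by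
  rw [c, map_add, swapAD_A, swapAD_D, add_comm]

lemma swapAD_d : swapAD d = d := by
  rw [d, map_add, map_mul, map_mul, swapAD_A, swapAD_D, add_comm]

lemma swapAD_eq_self_of_mem_closure {x : R} (hx : x ∈ Subring.closure {c, d}) :
    swapAD x = x :=
  RingHom.eqOn_set_closure (f := swapAD) (g := RingHom.id R)
    (by rintro y (rfl | rfl); exacts [swapAD_c, swapAD_d]) hx

lemma D_ne_A : D ≠ A := fun h =>
  Bool.noConfusion (FreeMonoid.of_injective ((single_left_inj one_ne_zero).mp h))

lemma eq_zero_of_mem_closure_of_mul_D_mem_closure {h : R} (hh : h ∈ Subring.closure {c, d})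
    (hhD : h * D ∈ Subring.closure {c, d}) : h = 0 := by
  have hDA : h * D = h * A := by
    simpa only [map_mul, swapAD_D, swapAD_eq_self_of_mem_closure hh]
      using (swapAD_eq_self_of_mem_closure hhD).symm
  exact (mul_eq_zero.mp (mul_sub h D A ▸ sub_eq_zero.mpr hDA)).resolve_right
    (sub_ne_zero.mpr D_ne_A)

theorem cd_plus_cdD_unique_general (f f' g g' : R)
    (hf : f ∈ Subring.closure {c, d}) (hf' : f' ∈ Subring.closure {c, d})
    (hg : g ∈ Subring.closure {c, d}) (hg' : g' ∈ Subring.closure {c, d})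
    (heq : f + g * D = f' + g' * D) :
    f = f' ∧ g = g' := by
  have hdiff : (g' - g) * D = f - f' := by
    rw [sub_mul, sub_eq_sub_iff_add_eq_add, heq, add_comm]
  have hg_eq : g' - g = 0 :=
    eq_zero_of_mem_closure_of_mul_D_mem_closure (sub_mem hg' hg) (hdiff ▸ sub_mem hf hf')
  refine ⟨sub_eq_zero.mp ?_, (sub_eq_zero.mp hg_eq).symm⟩
  rw [← hdiff, hg_eq, zero_mul]

/-- If `p = f + g·D = f' + g'·D` where `f, f'` are homogeneous cd-polynomials of
degree `n` and `g, g'` are homogeneous cd-polynomials of degree `n - 1`, then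
`f = f'` and `g = g'`. -/
theorem cd_plus_cdD_unique (n : ℕ) (f f' g g' : R)
    (hf : f ∈ Subring.closure {c, d}) (hf' : f' ∈ Subring.closure {c, d})
    (hg : g ∈ Subring.closure {c, d}) (hg' : g' ∈ Subring.closure {c, d})
    (hfn : Homog n f) (hf'n : Homog n f')
    (hgn : Homog (n - 1) g) (hg'n : Homog (n - 1) g')
    (heq : f + g * D = f' + g' * D) :
    f = f' ∧ g = g' :=
  cd_plus_cdD_unique_general f f' g g' hf hf' hg hg' heq
end
end

section
/- The element ADA + DAD of ℤ⟨A,D⟩ is invariant under the automorphism swapping A and D but does not lie in the subring generated by c = A+D and d = AD+DA; hence the fixed subring of the swap automorphism strictly contains the cd-subring. -/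
noncomputable section

/-- The ring automorphism of `ℤ⟨A,D⟩` exchanging `A` and `D`. -/
def bar : R →+* R := MonoidAlgebra.mapDomainRingHom ℤ (FreeMonoid.map not)

/-- Monoid hom sending the generators to `X` and `X+1` in `(ZMod 2)[X]`. -/
def G : FreeMonoid Bool →* Polynomial (ZMod 2) :=
  FreeMonoid.lift (fun b => if b then Polynomial.X + 1 else Polynomial.X)

/-- Ring hom `ℤ⟨A,D⟩ → (ZMod 2)[X]`, `A ↦ X`, `D ↦ X+1`. -/
def φ : R →+* Polynomial (ZMod 2) :=
  MonoidAlgebra.liftNCRingHom (Int.castRingHom _) G (fun _ _ => Commute.all _ _)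

lemma φA : φ A = Polynomial.X := by
  simp [φ, A, MonoidAlgebra.liftNCRingHom, G]

lemma φD : φ D = Polynomial.X + 1 := by
  simp [φ, D, MonoidAlgebra.liftNCRingHom, G]

lemma barA : bar A = D := by
  simp [bar, A, D, MonoidAlgebra.mapDomainRingHom]

lemma barD : bar D = A := by
  simp [bar, A, D, MonoidAlgebra.mapDomainRingHom]

lemma two_eq_zero' : (2 : Polynomial (ZMod 2)) = 0 := by
  have h : (2 : Polynomial (ZMod 2)) = Polynomial.C 1 + Polynomial.C 1 := by
    rw [Polynomial.C_1]; ring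
  rw [h, ← Polynomial.C_add, show (1 + 1 : ZMod 2) = 0 from rfl, Polynomial.C_0]

lemma three_eq_one' : (3 : Polynomial (ZMod 2)) = 1 := by
  rw [show (3 : Polynomial (ZMod 2)) = 2 + 1 by norm_num, two_eq_zero', zero_add]

lemma φc : φ c = 1 := by
  have : φ c = Polynomial.X + (Polynomial.X + 1) := by
    rw [show c = A + D from rfl, map_add, φA, φD]
  rw [this]; ring_nf; rw [two_eq_zero']; ring

lemma φd : φ d = 0 := by
  have : φ d = Polynomial.X * (Polynomial.X + 1) + (Polynomial.X + 1) * Polynomial.X := by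
    rw [show d = A * D + D * A from rfl, map_add, map_mul, map_mul, φA, φD]
  rw [this]; ring_nf; rw [two_eq_zero']; ring

lemma φtarget : φ (A * D * A + D * A * D) = Polynomial.X ^ 2 + Polynomial.X := by
  rw [map_add, map_mul, map_mul, map_mul, map_mul, φA, φD]
  ring_nf
  rw [two_eq_zero', three_eq_one']
  ring

/-- `ADA + DAD` is invariant under the swap automorphism but does not lie in the
subring generated by `c` and `d`; hence the fixed subring of the swap strictly
contains the cd-subring. -/
theorem ada_dad_not_in_cd :
    bar (A * D * A + D * A * D) = A * D * A + D * A * D ∧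
    A * D * A + D * A * D ∉ Subring.closure {c, d} := by
  constructor
  · rw [map_add, map_mul, map_mul, map_mul, map_mul, barA, barD, add_comm]
  · intro h
    have hmem : φ (A * D * A + D * A * D) ∈ (Subring.closure {c, d}).map φ :=
      Subring.mem_map.2 ⟨_, h, rfl⟩
    rw [RingHom.map_closure] at hmem
    have himg : φ '' {c, d} ⊆ (⊥ : Subring (Polynomial (ZMod 2))) := by
      rintro x ⟨y, hy, rfl⟩
      rcases hy with rfl | rfl
      · rw [φc]; exact Subring.one_mem _
      · rw [φd]; exact Subring.zero_mem _
    have hbot : φ (A * D * A + D * A * D) ∈ (⊥ : Subring (Polynomial (ZMod 2))) :=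
      Subring.closure_le.2 himg hmem
    rw [Subring.mem_bot] at hbot
    obtain ⟨n, hn⟩ := hbot
    rw [φtarget] at hn
    have h1 : (Polynomial.X ^ 2 + Polynomial.X : Polynomial (ZMod 2)).coeff 1 = 1 := by
      simp [Polynomial.coeff_X_one]
    rw [← hn] at h1
    have h2 : ((n : Polynomial (ZMod 2))).coeff 1 = 0 := by
      have : ((n : Polynomial (ZMod 2))) = Polynomial.C ((n : ZMod 2)) := by simp
      rw [this, Polynomial.coeff_C]
      simp
    rw [h2] at h1
    exact one_ne_zero h1.symm
end
end
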